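/- For integers i ≥ 3 and k ≥ i + 2, the number of nonnegative integers having at most 1 representation as a nonnegative integer combination of F_i, F_{i+2}, F_{i+k} equals (3·F_i·F_{i+2} − F_i − F_{i+2} + 1)/2. -/
import Mathlib


/-- Number of representations of `n` as a nonnegative integer combination of `a`, `b`, `c`. -/
noncomputable def repCount (a b c : ℕ) (n : ℤ) : ℕ :=
  Nat.card {v : ℕ × ℕ × ℕ // (v.1 : ℤ) * a + v.2.1 * b + v.2.2 * c = n}

/-- `g` is the `p`-Frobenius number of `a, b, c`: the largest integer with at most `p`
representations. -/
def IsPFrob (p a b c : ℕ) (g : ℤ) : Prop :=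
  IsGreatest {n : ℤ | repCount a b c n ≤ p} g

/-- Lucas numbers. -/
def lucas : ℕ → ℕ
  | 0 => 2
  | 1 => 1
  | n + 2 => lucas n + lucas (n + 1)

/-- inverse residue: the unique `y < a` with `y*b ≡ n [MOD a]`. -/
def yv (a b n : ℕ) : ℕ := ((n : ZMod a) * (b : ZMod a)⁻¹).val

lemma yv_lt (a b n : ℕ) (ha : 0 < a) : yv a b n < a := by
  haveI : NeZero a := ⟨ha.ne'⟩
  exact ZMod.val_lt _

lemma yv_modeq (a b n : ℕ) (ha : 0 < a) (hab : Nat.Coprime a b) :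
    yv a b n * b ≡ n [MOD a] := by
  haveI : NeZero a := ⟨ha.ne'⟩
  have hu : IsUnit (b : ZMod a) := (ZMod.isUnit_iff_coprime b a).mpr hab.symm
  have h1 : ((yv a b n : ZMod a)) = (n : ZMod a) * (b : ZMod a)⁻¹ := by
    simp [yv, ZMod.natCast_val, ZMod.cast_id]
  rw [← ZMod.natCast_eq_natCast_iff]
  push_cast
  rw [h1, mul_assoc, ZMod.inv_mul_of_unit _ hu, mul_one]

lemma yv_unique (a b n y : ℕ) (ha : 0 < a) (hab : Nat.Coprime a b)
    (hy : y < a) (h : y * b ≡ n [MOD a]) : y = yv a b n := by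
  have h3 : y * b ≡ yv a b n * b [MOD a] := h.trans (yv_modeq a b n ha hab).symm
  have h4 : y ≡ yv a b n [MOD a] :=
    Nat.ModEq.cancel_right_of_coprime (by simpa [Nat.Coprime] using hab) h3
  rwa [Nat.ModEq, Nat.mod_eq_of_lt hy, Nat.mod_eq_of_lt (yv_lt a b n ha)] at h4

lemma sol_finite (a b c : ℕ) (ha : 0 < a) (hb : 0 < b) (hc : 0 < c) (n : ℤ) :
    Finite {v : ℕ × ℕ × ℕ // (v.1 : ℤ) * a + v.2.1 * b + v.2.2 * c = n} := by
  have hsub : {v : ℕ × ℕ × ℕ | (v.1 : ℤ) * a + v.2.1 * b + v.2.2 * c = n} ⊆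
      Set.Iic (n.toNat, n.toNat, n.toNat) := by
    rintro ⟨x, y, z⟩ h
    simp only [Set.mem_setOf_eq] at h
    have h1 : (x : ℤ) ≤ n := by nlinarith [(by positivity : (0:ℤ) < (a:ℤ)),
      (by positivity : (0:ℤ) < (b:ℤ)), (by positivity : (0:ℤ) < (c:ℤ))]
    have h2 : (y : ℤ) ≤ n := by nlinarith [(by positivity : (0:ℤ) < (a:ℤ)),
      (by positivity : (0:ℤ) < (b:ℤ)), (by positivity : (0:ℤ) < (c:ℤ))]
    have h3 : (z : ℤ) ≤ n := by nlinarith [(by positivity : (0:ℤ) < (a:ℤ)),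
      (by positivity : (0:ℤ) < (b:ℤ)), (by positivity : (0:ℤ) < (c:ℤ))]
    refine ⟨?_, ?_, ?_⟩ <;> · simp only []; omega
  exact ((Set.finite_Iic _).subset hsub).to_subtype

lemma mem_iff (a b c : ℕ) (ha : 2 ≤ a) (hb : 2 ≤ b) (hab : Nat.Coprime a b)
    (hc : 2 * (a * b) < c + a + b) (n : ℕ) :
    repCount a b c (n : ℤ) ≤ 1 ↔ n < yv a b n * b + a * b := by
  have ha0 : 0 < a := by omega
  have hb0 : 0 < b := by omega
  have hab' : a + b ≤ a * b := by nlinarith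
  have hc0 : 0 < c := by omega
  set y0 := yv a b n with hy0
  have hy0lt : y0 < a := yv_lt a b n ha0
  have hmod : y0 * b ≡ n [MOD a] := yv_modeq a b n ha0 hab
  have hexp : (y0 + a) * b = y0 * b + a * b := add_mul _ _ _
  haveI : Finite {v : ℕ × ℕ × ℕ // (v.1 : ℤ) * a + v.2.1 * b + v.2.2 * c = (n : ℤ)} :=
    sol_finite a b c ha0 hb0 hc0 n
  constructor
  · -- contrapositive: if n ≥ y0*b + a*b, two representations
    intro hle
    by_contra hn
    push_neg at hn
    have hmod2 : (y0 + a) * b ≡ n [MOD a] := by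
      have h6 : n ≡ n + a * b [MOD a] := (Nat.modEq_iff_dvd' (by omega)).mpr ⟨b, by omega⟩
      have h7 : y0 * b + a * b ≡ n + a * b [MOD a] := Nat.ModEq.add_right _ hmod
      rw [hexp]
      exact h7.trans h6.symm
    have hle2 : (y0 + a) * b ≤ n := by omega
    have hdvd : a ∣ n - (y0 + a) * b := (Nat.modEq_iff_dvd' hle2).mp hmod2
    obtain ⟨x1, hx1⟩ := hdvd
    have e1 : a * x1 + (y0 * b + a * b) = n := by omega
    have e1z : (a : ℤ) * x1 + ((y0 : ℤ) * b + (a : ℤ) * b) = (n : ℤ) := by exact_mod_cast e1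
    have h1 : ((x1 : ℤ)) * a + ((y0 + a : ℕ) : ℤ) * b + ((0:ℕ) : ℤ) * c = (n : ℤ) := by
      push_cast; linear_combination e1z
    have h2 : (((x1 + b : ℕ)) : ℤ) * a + ((y0 : ℕ) : ℤ) * b + ((0:ℕ) : ℤ) * c = (n : ℤ) := by
      push_cast; linear_combination e1z
    haveI : Nontrivial {v : ℕ × ℕ × ℕ // (v.1 : ℤ) * a + v.2.1 * b + v.2.2 * c = (n : ℤ)} := by
      refine ⟨⟨⟨(x1, y0 + a, 0), h1⟩, ⟨(x1 + b, y0, 0), h2⟩, ?_⟩⟩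
      simp only [ne_eq, Subtype.mk.injEq, Prod.mk.injEq]
      rintro ⟨-, h, -⟩
      omega
    have h8 := Finite.one_lt_card
      (α := {v : ℕ × ℕ × ℕ // (v.1 : ℤ) * a + v.2.1 * b + v.2.2 * c = (n : ℤ)})
    rw [repCount] at hle
    omega
  · intro hn
    -- n < c
    have hnc : n < c := by
      have h1 : n ≡ y0 * b + a * b [MOD a] := by
        have h6 : y0 * b ≡ y0 * b + a * b [MOD a] :=
          (Nat.modEq_iff_dvd' (by omega)).mpr ⟨b, by omega⟩
        exact hmod.symm.trans h6
      have hdvd : a ∣ y0 * b + a * b - n := (Nat.modEq_iff_dvd' hn.le).mp h1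
      have hge : a ≤ y0 * b + a * b - n := Nat.le_of_dvd (by omega) hdvd
      have hge' : n + a ≤ y0 * b + a * b := by omega
      have hyb : y0 * b + b ≤ a * b := by
        have h9 : (y0 + 1) * b ≤ a * b := Nat.mul_le_mul_right _ (by omega)
        have h9' : (y0 + 1) * b = y0 * b + b := by ring
        omega
      omega
    -- subsingleton
    haveI : Subsingleton {v : ℕ × ℕ × ℕ // (v.1 : ℤ) * a + v.2.1 * b + v.2.2 * c = (n : ℤ)} := by
      constructor
      rintro ⟨⟨x1, y1, z1⟩, e1⟩ ⟨⟨x2, y2, z2⟩, e2⟩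
      have e1' : x1 * a + y1 * b + z1 * c = n := by exact_mod_cast e1
      have e2' : x2 * a + y2 * b + z2 * c = n := by exact_mod_cast e2
      have key : ∀ x y z : ℕ, x * a + y * b + z * c = n → y = y0 ∧ z = 0 := by
        intro x y z e
        have hz : z = 0 := by
          by_contra hz0
          have : c ≤ z * c := Nat.le_mul_of_pos_left c (by omega)
          omega
        subst hz
        have hyb : y * b ≤ n := by omega
        have hymod : y ≡ y0 [MOD a] := by
          have h5 : y * b ≡ n [MOD a] :=
            (Nat.modEq_iff_dvd' hyb).mpr ⟨x, by rw [Nat.mul_comm a x]; omega⟩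
          exact Nat.ModEq.cancel_right_of_coprime (by simpa [Nat.Coprime] using hab)
            (h5.trans hmod.symm)
        refine ⟨?_, rfl⟩
        rcases lt_or_ge y a with hq | hq
        · exact yv_unique a b n y ha0 hab hq
            ((Nat.modEq_iff_dvd' hyb).mpr ⟨x, by rw [Nat.mul_comm a x]; omega⟩)
        · exfalso
          have hy0y : y0 ≤ y := by omega
          obtain ⟨m, hm⟩ := (Nat.modEq_iff_dvd' hy0y).mp hymod.symm
          have hm0 : m ≠ 0 := by
            rintro rfl
            simp at hm
            omega
          have h10 : a ≤ a * m := Nat.le_mul_of_pos_right a (by omega)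
          have h11 : y0 + a ≤ y := by omega
          have h12 : (y0 + a) * b ≤ y * b := Nat.mul_le_mul_right _ h11
          omega
      obtain ⟨hy1, hz1⟩ := key _ _ _ e1'
      obtain ⟨hy2, hz2⟩ := key _ _ _ e2'
      have hx : x1 = x2 := by
        subst hy1 hz1
        subst hy2 hz2
        simp only [zero_mul, add_zero] at e1' e2'
        have : x1 * a = x2 * a := by omega
        exact Nat.eq_of_mul_eq_mul_right ha0 this
      apply Subtype.ext
      simp only [Prod.mk.injEq]
      exact ⟨hx, hy1.trans hy2.symm, hz1.trans hz2.symm⟩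
    rw [repCount]
    exact Finite.card_le_one_iff_subsingleton.mpr ‹_›

/-- the finset of naturals with at most one representation -/
def TT (a b : ℕ) : Finset ℕ :=
  ((Finset.range a).sigma fun y => Finset.range (b + y * b / a)).image
    (fun p => p.2 * a + (p.1 * b) % a)

lemma mem_TT (a b : ℕ) (ha : 0 < a) (hab : Nat.Coprime a b) (n : ℕ) :
    n ∈ TT a b ↔ n < yv a b n * b + a * b := by
  simp only [TT, Finset.mem_image, Finset.mem_sigma, Finset.mem_range]
  constructor
  · rintro ⟨⟨y, t⟩, ⟨hy, ht⟩, rfl⟩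
    simp only at ht ⊢
    have hr : (y * b) % a < a := Nat.mod_lt _ ha
    have hmodeq : y * b ≡ t * a + (y * b) % a [MOD a] := by
      show y * b % a = (t * a + y * b % a) % a
      rw [add_comm, Nat.add_mul_mod_self_right, Nat.mod_mod_of_dvd _ dvd_rfl]
    have hyv : y = yv a b (t * a + (y * b) % a) := yv_unique a b _ y ha hab hy hmodeq
    rw [← hyv]
    have h13 : (t + 1) * a ≤ (b + y * b / a) * a := Nat.mul_le_mul_right a ht
    have h14 : (b + y * b / a) * a = b * a + (y * b / a) * a := add_mul _ _ _
    have h15 : a * (y * b / a) + (y * b) % a = y * b := Nat.div_add_mod _ _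
    have h16 : (y * b / a) * a = a * (y * b / a) := Nat.mul_comm _ _
    have h17 : (t + 1) * a = t * a + a := by ring
    have h18 : b * a = a * b := Nat.mul_comm _ _
    omega
  · intro hn
    refine ⟨⟨yv a b n, n / a⟩, ⟨yv_lt a b n ha, ?_⟩, ?_⟩
    · simp only
      have hmodn : (yv a b n * b) % a = n % a := yv_modeq a b n ha hab
      have h1 : a * (n / a) + n % a = n := Nat.div_add_mod _ _
      have h2 : a * (yv a b n * b / a) + (yv a b n * b) % a = yv a b n * b :=
        Nat.div_add_mod _ _
      have h3 : a * (n / a) < a * (yv a b n * b / a + b) := by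
        have : a * (yv a b n * b / a + b) = a * (yv a b n * b / a) + a * b :=
          Nat.mul_add _ _ _
        omega
      have h4 := Nat.lt_of_mul_lt_mul_left h3
      omega
    · simp only
      have h1 : a * (n / a) + n % a = n := Nat.div_add_mod _ _
      have hmodn : (yv a b n * b) % a = n % a := yv_modeq a b n ha hab
      have h2 : (n / a) * a = a * (n / a) := Nat.mul_comm _ _
      omega

lemma TT_card (a b : ℕ) (ha : 0 < a) (hab : Nat.Coprime a b) :
    (TT a b).card = a * b + ∑ y ∈ Finset.range a, y * b / a := by
  rw [TT, Finset.card_image_of_injOn, Finset.card_sigma]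
  · simp only [Finset.card_range]
    rw [Finset.sum_add_distrib, Finset.sum_const, Finset.card_range, smul_eq_mul]
  · rintro ⟨y1, t1⟩ h1 ⟨y2, t2⟩ h2 heq
    simp only [Finset.coe_sigma, Set.mem_sigma_iff, Finset.mem_coe, Finset.mem_range] at h1 h2
    simp only at heq
    have hr1 : (y1 * b) % a < a := Nat.mod_lt _ ha
    have hr2 : (y2 * b) % a < a := Nat.mod_lt _ ha
    have hmeq : (y1 * b) % a = (y2 * b) % a := by
      have := congrArg (· % a) heq
      simpa [Nat.add_mul_mod_self_right, add_comm,
        Nat.mod_mod_of_dvd _ (dvd_refl a), Nat.mod_eq_of_lt hr1, Nat.mod_eq_of_lt hr2]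
        using this
    have hy : y1 = y2 := by
      have hc : y1 ≡ y2 [MOD a] :=
        Nat.ModEq.cancel_right_of_coprime (by simpa [Nat.Coprime] using hab) hmeq
      have := hc
      rwa [Nat.ModEq, Nat.mod_eq_of_lt h1.1, Nat.mod_eq_of_lt h2.1] at this
    have ht : t1 = t2 := by
      have h5 : t1 * a = t2 * a := by omega
      exact Nat.eq_of_mul_eq_mul_right ha h5
    subst hy ht
    rfl

lemma two_mul_sum (a b : ℕ) (ha : 0 < a) (hb : 0 < b) (hab : Nat.Coprime a b) :
    2 * ∑ y ∈ Finset.range a, y * b / a = (a - 1) * (b - 1) := by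
  set D := ∑ y ∈ Finset.range a, y * b / a with hD
  set M := ∑ y ∈ Finset.range a, y with hM
  have hmodsum : ∑ y ∈ Finset.range a, (y * b % a) = M := by
    refine Finset.sum_nbij' (i := fun y => y * b % a) (j := fun r => yv a b r)
      ?_ ?_ ?_ ?_ ?_
    · intro y hy
      exact Finset.mem_range.mpr (Nat.mod_lt _ ha)
    · intro r hr
      exact Finset.mem_range.mpr (yv_lt a b r ha)
    · intro y hy
      refine (yv_unique a b (y * b % a) y ha hab (Finset.mem_range.mp hy) ?_).symm
      show y * b % a = (y * b % a) % a
      rw [Nat.mod_mod_of_dvd _ dvd_rfl]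
    · intro r hr
      have h := yv_modeq a b r ha hab
      rw [Nat.ModEq, Nat.mod_eq_of_lt (Finset.mem_range.mp hr)] at h
      exact h
    · intro y hy
      rfl
  have hA : a * D + M = M * b := by
    have h1 : ∑ y ∈ Finset.range a, (a * (y * b / a) + y * b % a)
        = ∑ y ∈ Finset.range a, y * b := by
      refine Finset.sum_congr rfl fun y _ => Nat.div_add_mod _ _
    rw [Finset.sum_add_distrib, hmodsum, ← Finset.mul_sum, ← hD] at h1
    rw [h1, hM, ← Finset.sum_mul]
  have hG : M * 2 = a * (a - 1) := by rw [hM]; exact Finset.sum_range_id_mul_two a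
  apply Nat.eq_of_mul_eq_mul_left ha
  apply Nat.add_right_cancel (m := a * (a - 1))
  have e3 : (a - 1) * (b - 1) + (a - 1) = (a - 1) * b := by
    have hb1 : b - 1 + 1 = b := Nat.succ_pred_eq_of_pos hb
    calc (a - 1) * (b - 1) + (a - 1) = (a - 1) * ((b - 1) + 1) := by ring
      _ = (a - 1) * b := by rw [hb1]
  calc a * (2 * D) + a * (a - 1)
      = 2 * (a * D) + M * 2 := by rw [hG]; ring
    _ = 2 * (a * D + M) := by ring
    _ = 2 * (M * b) := by rw [hA]
    _ = (M * 2) * b := by ring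
    _ = (a * (a - 1)) * b := by rw [hG]
    _ = a * ((a - 1) * b) := by ring
    _ = a * ((a - 1) * (b - 1) + (a - 1)) := by rw [e3]
    _ = a * ((a - 1) * (b - 1)) + a * (a - 1) := by ring


theorem stmt14 (i k : ℕ) (hi : 3 ≤ i) (hk : i + 2 ≤ k) :
    letI F := Nat.fib
    (Nat.card {n : ℕ | repCount (F i) (F (i + 2)) (F (i + k)) (n : ℤ) ≤ 1} : ℚ) =
      (3 * (F i : ℚ) * F (i + 2) - F i - F (i + 2) + 1) / 2 := by
  show (Nat.card {n : ℕ | repCount (Nat.fib i) (Nat.fib (i + 2)) (Nat.fib (i + k))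
      (n : ℤ) ≤ 1} : ℚ) =
    (3 * (Nat.fib i : ℚ) * Nat.fib (i + 2) - Nat.fib i - Nat.fib (i + 2) + 1) / 2
  set a := Nat.fib i with hA
  set b := Nat.fib (i + 2) with hB
  set c := Nat.fib (i + k) with hC
  have hfib3 : Nat.fib 3 = 2 := by decide
  have ha : 2 ≤ a := by rw [hA, ← hfib3]; exact Nat.fib_mono hi
  have hb : 2 ≤ b := by rw [hB, ← hfib3]; exact Nat.fib_mono (by omega)
  have hab : Nat.Coprime a b := by
    have hgd : Nat.gcd i (i + 2) ∣ 2 := by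
      have := Nat.dvd_sub (Nat.gcd_dvd_right i (i + 2)) (Nat.gcd_dvd_left i (i + 2))
      simpa using this
    rw [Nat.Coprime, hA, hB, ← Nat.fib_gcd]
    rcases (Nat.dvd_prime Nat.prime_two).mp hgd with h | h <;> rw [h] <;> decide
  have hc : 2 * (a * b) < c + a + b := by
    obtain ⟨j, rfl⟩ : ∃ j, i = j + 3 := ⟨i - 3, by omega⟩
    set w := Nat.fib (j + 1) with hw
    set z := Nat.fib (j + 2) with hz
    set x := Nat.fib (j + 3) with hx
    set y := Nat.fib (j + 4) with hy
    have hxe : x = w + z := Nat.fib_add_two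
    have hye : y = z + x := Nat.fib_add_two
    have hbe : b = x + y := Nat.fib_add_two
    have hwz : w ≤ z := Nat.fib_mono (by omega)
    have hw1 : 1 ≤ w := Nat.fib_pos.mpr (by omega)
    have hcge : x * y + y * b ≤ c := by
      have hidx : (j + 3) + (j + 4) + 1 = 2 * (j + 3) + 2 := by omega
      have h1 : Nat.fib ((j + 3) + (j + 4) + 1) = x * y + y * b := by
        rw [Nat.fib_add]
      have h2 : Nat.fib (2 * (j + 3) + 2) ≤ c := by
        rw [hC]
        exact Nat.fib_mono (by omega)
      rw [hidx] at h1
      omega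
    have hx2z : x ≤ 2 * z := by omega
    nlinarith [sq_nonneg z]
  have hset : {n : ℕ | repCount a b c (n : ℤ) ≤ 1} = ↑(TT a b) := by
    ext n
    rw [Set.mem_setOf_eq, Finset.mem_coe, mem_TT a b (by omega) hab,
      mem_iff a b c ha hb hab hc]
  rw [hset, Nat.card_coe_set_eq, Set.ncard_coe_finset,
    TT_card a b (by omega) hab]
  have h2D := two_mul_sum a b (by omega) (by omega) hab
  have hq := congrArg (Nat.cast : ℕ → ℚ) h2D
  push_cast [Nat.cast_sub (show 1 ≤ a by omega), Nat.cast_sub (show 1 ≤ b by omega)] at hq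
  push_cast
  field_simp
  ring_nf
  ring_nf at hq
  linarith [hq]
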